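/- Let C be a strict monoidal category and R a D-structure on C consisting of natural isomorphisms R_X: X → X with R_I = id_I and (R_{X⊗Y}⊗id_Z)(id_X⊗R_{Y⊗Z}) = (id_X⊗R_{Y⊗Z})(R_{X⊗Y}⊗id_Z). Define D¹(R)_{X,Y} := (R_X⊗R_Y)R_{X⊗Y}⁻¹ : X⊗Y → X⊗Y. Then D¹(R) is a strong twine on C. -/

import Mathlib

open CategoryTheory MonoidalCategory

universe v u

/-- A monoidal category is strict when the associators and unitors are `eqToHom`s of
equalities of objects. -/
structure MonStrict (C : Type u) [Category.{v} C] [MonoidalCategory C] : Prop where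
  assocObj : ∀ X Y Z : C, (X ⊗ Y) ⊗ Z = X ⊗ (Y ⊗ Z)
  lidObj : ∀ X : C, 𝟙_ C ⊗ X = X
  ridObj : ∀ X : C, X ⊗ 𝟙_ C = X
  assocHom : ∀ X Y Z : C, (α_ X Y Z).hom = eqToHom (assocObj X Y Z)
  lidHom : ∀ X : C, (λ_ X).hom = eqToHom (lidObj X)
  ridHom : ∀ X : C, (ρ_ X).hom = eqToHom (ridObj X)

variable {C : Type u} [Category.{v} C] [MonoidalCategory C]

/-- Transport of an endomorphism along an equality of objects of a strict monoidal
category. -/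
def cE {X Y : C} (h : X = Y) (f : Y ⟶ Y) : X ⟶ X := eqToHom h ≫ f ≫ eqToHom h.symm

/-- A pure-braided structure on a strict monoidal category: two families of natural
isomorphisms `A, B : U ⊗ V ⊗ W ≅ U ⊗ V ⊗ W` satisfying the pure-braided axioms. -/
structure PureBraided (C : Type u) [Category.{v} C] [MonoidalCategory C]
    (hS : MonStrict C) where
  A : ∀ U V W : C, U ⊗ (V ⊗ W) ≅ U ⊗ (V ⊗ W)
  B : ∀ U V W : C, U ⊗ (V ⊗ W) ≅ U ⊗ (V ⊗ W)
  natA : ∀ {U V W U' V' W' : C} (f : U ⟶ U') (g : V ⟶ V') (h : W ⟶ W'),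
    (f ⊗ₘ (g ⊗ₘ h)) ≫ (A U' V' W').hom = (A U V W).hom ≫ (f ⊗ₘ (g ⊗ₘ h))
  natB : ∀ {U V W U' V' W' : C} (f : U ⟶ U') (g : V ⟶ V') (h : W ⟶ W'),
    (f ⊗ₘ (g ⊗ₘ h)) ≫ (B U' V' W').hom = (B U V W).hom ≫ (f ⊗ₘ (g ⊗ₘ h))
  /-- `A_{U⊗V,W,X} = A_{U,V⊗W,X}(id_U ⊗ A_{V,W,X})` -/
  a1 : ∀ U V W X : C, (A (U ⊗ V) W X).hom =
    cE (by simp [hS.assocObj]) ((𝟙 U ⊗ₘ (A V W X).hom) ≫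
      cE (by simp [hS.assocObj]) (A U (V ⊗ W) X).hom)
  /-- `A_{U,V,W⊗X} = (A_{U,V,W} ⊗ id_X) A_{U,V⊗W,X}` -/
  a2 : ∀ U V W X : C, (A U V (W ⊗ X)).hom =
    cE (by simp [hS.assocObj]) ((cE (by simp [hS.assocObj]) (A U (V ⊗ W) X).hom) ≫
      ((A U V W).hom ⊗ₘ 𝟙 X))
  /-- `B_{U⊗V,W,X} = (id_U ⊗ B_{V,W,X}) B_{U,V⊗W,X}` -/
  baba : ∀ U V W X : C, (B (U ⊗ V) W X).hom =
    cE (by simp [hS.assocObj]) ((cE (by simp [hS.assocObj]) (B U (V ⊗ W) X).hom) ≫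
      (𝟙 U ⊗ₘ (B V W X).hom))
  /-- `B_{U,V,W⊗X} = B_{U,V⊗W,X}(B_{U,V,W} ⊗ id_X)` -/
  b2 : ∀ U V W X : C, (B U V (W ⊗ X)).hom =
    cE (by simp [hS.assocObj]) (((B U V W).hom ⊗ₘ 𝟙 X) ≫
      cE (by simp [hS.assocObj]) (B U (V ⊗ W) X).hom)
  /-- `(A_{U,V,W} ⊗ id_X)(id_U ⊗ B_{V,W,X}) = (id_U ⊗ B_{V,W,X})(A_{U,V,W} ⊗ id_X)` -/
  cab : ∀ U V W X : C,
    cE (by simp [hS.assocObj]) (𝟙 U ⊗ₘ (B V W X).hom) ≫ ((A U V W).hom ⊗ₘ 𝟙 X)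
    = ((A U V W).hom ⊗ₘ 𝟙 X) ≫ cE (by simp [hS.assocObj]) (𝟙 U ⊗ₘ (B V W X).hom)
  /-- `A_{U,I,V} = B_{U,I,V}` -/
  t1t : ∀ U V : C, A U (𝟙_ C) V = B U (𝟙_ C) V

/-- A twine on a strict monoidal category. -/
structure Twine (C : Type u) [Category.{v} C] [MonoidalCategory C]
    (hS : MonStrict C) where
  D : ∀ X Y : C, X ⊗ Y ≅ X ⊗ Y
  nat : ∀ {X Y X' Y' : C} (f : X ⟶ X') (g : Y ⟶ Y'),
    (f ⊗ₘ g) ≫ (D X' Y').hom = (D X Y).hom ≫ (f ⊗ₘ g)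
  unit : (D (𝟙_ C) (𝟙_ C)).hom = 𝟙 (𝟙_ C ⊗ 𝟙_ C)
  /-- `(D_{X,Y} ⊗ id_Z) D_{X⊗Y,Z} = (id_X ⊗ D_{Y,Z}) D_{X,Y⊗Z}` -/
  fus : ∀ X Y Z : C, (D (X ⊗ Y) Z).hom ≫ ((D X Y).hom ⊗ₘ 𝟙 Z)
    = cE (by simp [hS.assocObj]) ((D X (Y ⊗ Z)).hom ≫ (𝟙 X ⊗ₘ (D Y Z).hom))
  /-- the entwining axiom -/
  ent : ∀ X Y Z T : C,
    cE (by simp [hS.assocObj]) (𝟙 X ⊗ₘ (D Y (Z ⊗ T)).hom) ≫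
      cE (by simp [hS.assocObj]) (𝟙 X ⊗ₘ ((D Y Z).inv ⊗ₘ 𝟙 T)) ≫
        ((D (X ⊗ Y) Z).hom ⊗ₘ 𝟙 T)
    = ((D (X ⊗ Y) Z).hom ⊗ₘ 𝟙 T) ≫
        cE (by simp [hS.assocObj]) (𝟙 X ⊗ₘ ((D Y Z).inv ⊗ₘ 𝟙 T)) ≫
          cE (by simp [hS.assocObj]) (𝟙 X ⊗ₘ (D Y (Z ⊗ T)).hom)

/-- A strong twine on a strict monoidal category. -/
structure StrongTwine (C : Type u) [Category.{v} C] [MonoidalCategory C]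
    (hS : MonStrict C) where
  D : ∀ X Y : C, X ⊗ Y ≅ X ⊗ Y
  nat : ∀ {X Y X' Y' : C} (f : X ⟶ X') (g : Y ⟶ Y'),
    (f ⊗ₘ g) ≫ (D X' Y').hom = (D X Y).hom ≫ (f ⊗ₘ g)
  unit : (D (𝟙_ C) (𝟙_ C)).hom = 𝟙 (𝟙_ C ⊗ 𝟙_ C)
  /-- `(T_{U,V} ⊗ id_W) T_{U⊗V,W} = (id_U ⊗ T_{V,W}) T_{U,V⊗W}` -/
  fus : ∀ X Y Z : C, (D (X ⊗ Y) Z).hom ≫ ((D X Y).hom ⊗ₘ 𝟙 Z)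
    = cE (by simp [hS.assocObj]) ((D X (Y ⊗ Z)).hom ≫ (𝟙 X ⊗ₘ (D Y Z).hom))
  /-- `(T_{U,V} ⊗ id_W)(id_U ⊗ T_{V,W}) = (id_U ⊗ T_{V,W})(T_{U,V} ⊗ id_W)` -/
  comm : ∀ X Y Z : C,
    cE (by simp [hS.assocObj]) (𝟙 X ⊗ₘ (D Y Z).hom) ≫ ((D X Y).hom ⊗ₘ 𝟙 Z)
    = ((D X Y).hom ⊗ₘ 𝟙 Z) ≫ cE (by simp [hS.assocObj]) (𝟙 X ⊗ₘ (D Y Z).hom)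

/-- A D-structure (consisting of isomorphisms) on a strict monoidal category. -/
structure DStructure (C : Type u) [Category.{v} C] [MonoidalCategory C]
    (hS : MonStrict C) where
  R : ∀ X : C, X ≅ X
  nat : ∀ {X Y : C} (f : X ⟶ Y), f ≫ (R Y).hom = (R X).hom ≫ f
  unit : (R (𝟙_ C)).hom = 𝟙 (𝟙_ C)
  /-- `(R_{X⊗Y} ⊗ id_Z)(id_X ⊗ R_{Y⊗Z}) = (id_X ⊗ R_{Y⊗Z})(R_{X⊗Y} ⊗ id_Z)` -/
  comm : ∀ X Y Z : C,
    cE (by simp [hS.assocObj]) (𝟙 X ⊗ₘ (R (Y ⊗ Z)).hom) ≫ ((R (X ⊗ Y)).hom ⊗ₘ 𝟙 Z)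
    = ((R (X ⊗ Y)).hom ⊗ₘ 𝟙 Z) ≫ cE (by simp [hS.assocObj]) (𝟙 X ⊗ₘ (R (Y ⊗ Z)).hom)

/-!
Naturality of `R` makes each `R_W` commute with every endomorphism of `W`. Fusion is then a
direct computation: both sides reduce to `R_{XYZ}⁻¹ (R_X ⊗ R_Y ⊗ R_Z)`. For the commutation
axiom, write `id_X ⊗ D¹_{Y,Z} = (id_X ⊗ R_{YZ}⁻¹)(id_X ⊗ R_Y ⊗ R_Z)` and
`D¹_{X,Y} ⊗ id_Z = (R_{XY}⁻¹ ⊗ id_Z)(R_X ⊗ R_Y ⊗ id_Z)`: the two inverse factors commute by the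
D-structure axiom, and every other pair of factors commutes by the centrality of `R`.
-/

section Endomorphisms

variable {𝒞 : Type*} [Category 𝒞] {W : 𝒞}

theorem inv_comp_comm_of_hom_comp_comm (p : W ≅ W) {f : W ⟶ W}
    (h : p.hom ≫ f = f ≫ p.hom) : p.inv ≫ f = f ≫ p.inv := by
  rw [Iso.inv_comp_eq, reassoc_of% h, Iso.hom_inv_id, Category.comp_id]

theorem comp_comp_comm {p m q n : W ⟶ W} (hpq : p ≫ q = q ≫ p)
    (hmq : m ≫ q = q ≫ m) (hpn : p ≫ n = n ≫ p) (hmn : m ≫ n = n ≫ m) :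
    (p ≫ m) ≫ q ≫ n = (q ≫ n) ≫ p ≫ m := by
  simp only [Category.assoc]
  rw [reassoc_of% hmq, reassoc_of% hpq, hmn, reassoc_of% hpn]

variable {X : 𝒞}

theorem cE_comp (h : X = W) (f g : W ⟶ W) : cE h (f ≫ g) = cE h f ≫ cE h g := by
  simp [cE]

theorem cE_comp_comm (h : X = W) {f g : W ⟶ W} (hfg : f ≫ g = g ≫ f) :
    cE h f ≫ cE h g = cE h g ≫ cE h f := by
  rw [← cE_comp, hfg, cE_comp]

theorem cE_app {F : ∀ V : 𝒞, V ⟶ V} (h : X = W) : cE h (F W) = F X := by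
  subst h
  simp [cE]

theorem cE_inv_comp_comm (h : X = W) (e : W ≅ W) {f : X ⟶ X}
    (hc : cE h e.hom ≫ f = f ≫ cE h e.hom) : cE h e.inv ≫ f = f ≫ cE h e.inv := by
  subst h
  simp only [cE, eqToHom_refl, Category.id_comp, Category.comp_id] at hc ⊢
  exact inv_comp_comm_of_hom_comp_comm e hc

end Endomorphisms

theorem tensorHom_comp_comm {X Y : C} {f f' : X ⟶ X} {g g' : Y ⟶ Y}
    (hf : f ≫ f' = f' ≫ f) (hg : g ≫ g' = g' ≫ g) :
    (f ⊗ₘ g) ≫ (f' ⊗ₘ g') = (f' ⊗ₘ g') ≫ (f ⊗ₘ g) := by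
  rw [tensorHom_comp_tensorHom, tensorHom_comp_tensorHom, hf, hg]

theorem MonStrict.cE_tensorHom (hS : MonStrict C) {X Y Z : C}
    (h : (X ⊗ Y) ⊗ Z = X ⊗ (Y ⊗ Z)) (f : X ⟶ X) (g : Y ⟶ Y) (k : Z ⟶ Z) :
    cE h (f ⊗ₘ (g ⊗ₘ k)) = (f ⊗ₘ g) ⊗ₘ k := by
  have hα : eqToHom h = (α_ X Y Z).hom := (hS.assocHom X Y Z).symm
  rw [cE, ← Category.assoc, hα, ← associator_naturality, ← hα]
  simp

namespace DStructure

variable {hS : MonStrict C} (R : DStructure C hS)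

theorem hom_comp_comm {X : C} (f : X ⟶ X) : (R.R X).hom ≫ f = f ≫ (R.R X).hom :=
  (R.nat f).symm

theorem inv_comp_comm {X : C} (f : X ⟶ X) : (R.R X).inv ≫ f = f ≫ (R.R X).inv :=
  inv_comp_comm_of_hom_comp_comm _ (R.hom_comp_comm f)

theorem nat_inv {X Y : C} (f : X ⟶ Y) : f ≫ (R.R Y).inv = (R.R X).inv ≫ f := by
  rw [Iso.comp_inv_eq, Category.assoc, R.nat f, Iso.inv_hom_id_assoc]

theorem inv_tensorUnit_tensor_tensorUnit : (R.R (𝟙_ C ⊗ 𝟙_ C)).inv = 𝟙 _ := by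
  have hI : (R.R (𝟙_ C)).inv = 𝟙 _ := Iso.inv_ext (by rw [R.unit, Category.comp_id])
  rw [← cE_app (F := fun V => (R.R V).inv) (hS.ridObj (𝟙_ C)), hI]
  simp [cE]

/-- The twine `D¹(R)` of `R`. -/
def d1 (X Y : C) : X ⊗ Y ≅ X ⊗ Y := (R.R (X ⊗ Y)).symm ≪≫ (R.R X ⊗ᵢ R.R Y)

theorem d1_hom (X Y : C) :
    (R.d1 X Y).hom = (R.R (X ⊗ Y)).inv ≫ ((R.R X).hom ⊗ₘ (R.R Y).hom) := rfl

theorem d1_nat {X Y X' Y' : C} (f : X ⟶ X') (g : Y ⟶ Y') :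
    (f ⊗ₘ g) ≫ (R.d1 X' Y').hom = (R.d1 X Y).hom ≫ (f ⊗ₘ g) := by
  simp only [d1_hom, reassoc_of% R.nat_inv (f ⊗ₘ g), Category.assoc, tensorHom_comp_tensorHom,
    R.nat f, R.nat g]

theorem d1_unit : (R.d1 (𝟙_ C) (𝟙_ C)).hom = 𝟙 _ := by
  simp [d1_hom, R.unit, R.inv_tensorUnit_tensor_tensorUnit]

theorem d1_fus (X Y Z : C) (h : (X ⊗ Y) ⊗ Z = X ⊗ (Y ⊗ Z)) :
    (R.d1 (X ⊗ Y) Z).hom ≫ ((R.d1 X Y).hom ⊗ₘ 𝟙 Z)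
      = cE h ((R.d1 X (Y ⊗ Z)).hom ≫ (𝟙 X ⊗ₘ (R.d1 Y Z).hom)) := by
  simp only [d1_hom, Category.assoc, tensorHom_comp_tensorHom, Category.comp_id,
    Iso.hom_inv_id_assoc, cE_comp, hS.cE_tensorHom, cE_app (F := fun V => (R.R V).inv)]

theorem d1_comm (X Y Z : C) (h : (X ⊗ Y) ⊗ Z = X ⊗ (Y ⊗ Z)) :
    cE h (𝟙 X ⊗ₘ (R.d1 Y Z).hom) ≫ ((R.d1 X Y).hom ⊗ₘ 𝟙 Z)
      = ((R.d1 X Y).hom ⊗ₘ 𝟙 Z) ≫ cE h (𝟙 X ⊗ₘ (R.d1 Y Z).hom) := by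
  have hp : cE h (𝟙 X ⊗ₘ (R.d1 Y Z).hom)
      = cE h (𝟙 X ⊗ₘ (R.R (Y ⊗ Z)).inv) ≫ ((𝟙 X ⊗ₘ (R.R Y).hom) ⊗ₘ (R.R Z).hom) := by
    rw [d1_hom, ← hS.cE_tensorHom h, ← cE_comp, tensorHom_comp_tensorHom, Category.comp_id]
  have hq : (R.d1 X Y).hom ⊗ₘ 𝟙 Z
      = ((R.R (X ⊗ Y)).inv ⊗ₘ 𝟙 Z) ≫ (((R.R X).hom ⊗ₘ (R.R Y).hom) ⊗ₘ 𝟙 Z) := by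
    rw [d1_hom, tensorHom_comp_tensorHom, Category.comp_id]
  have hInvComm : cE h (𝟙 X ⊗ₘ (R.R (Y ⊗ Z)).inv) ≫ ((R.R (X ⊗ Y)).hom ⊗ₘ 𝟙 Z)
      = ((R.R (X ⊗ Y)).hom ⊗ₘ 𝟙 Z) ≫ cE h (𝟙 X ⊗ₘ (R.R (Y ⊗ Z)).inv) :=
    cE_inv_comp_comm h (Iso.refl X ⊗ᵢ R.R (Y ⊗ Z)) (R.comm X Y Z)
  rw [hp, hq]
  refine comp_comp_comm ?_ ?_ ?_ ?_
  · exact (inv_comp_comm_of_hom_comp_comm (R.R (X ⊗ Y) ⊗ᵢ Iso.refl Z) hInvComm.symm).symm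
  · exact tensorHom_comp_comm (R.inv_comp_comm _).symm (by simp)
  · rw [← hS.cE_tensorHom h]
    exact cE_comp_comm h (tensorHom_comp_comm (by simp) (R.inv_comp_comm _))
  · exact tensorHom_comp_comm (tensorHom_comp_comm (by simp) rfl) (by simp)

def toStrongTwine : StrongTwine C hS where
  D := R.d1
  nat := R.d1_nat
  unit := R.d1_unit
  fus X Y Z := R.d1_fus X Y Z _
  comm X Y Z := R.d1_comm X Y Z _

end DStructure

/-- A D-structure `R` consisting of isomorphisms gives rise to the strong twine
`D¹(R)_{X,Y} = (R_X ⊗ R_Y) R_{X⊗Y}⁻¹`. -/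
theorem stmt15 (hS : MonStrict C) (R : DStructure C hS) :
    ∃ T : StrongTwine C hS, ∀ X Y : C,
      (T.D X Y).hom = (R.R (X ⊗ Y)).inv ≫ ((R.R X).hom ⊗ₘ (R.R Y).hom) :=
  ⟨R.toStrongTwine, R.d1_hom⟩
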